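/- For every integer n ≥ 0, under the conditional probability measure P(·|Δ_n) the random variable σ_n is distributed as Exp(λ+μ) and is independent of the random vector (σ_0,…,σ_{n−1}). (The service time of the last customer of a busy period of length n+1 is exponential of parameter λ+μ, independent of the other service times.) -/

import Mathlib

/-!
On `Δ_n` the past `(τ_j, σ_j)_{j<n}` lies in the event `D` that the busy period survives the
first `n` arrivals, and customer `n`, who waits `W = ∑_{j<n} (σ_j - τ_j) ≥ 0`, leaves before the
next arrival: `σ_n + W ≤ τ_n`. The past is independent of `(σ_n, τ_n)`, and by memorylessness of
`τ_n`, `P(σ_n ∈ B, σ_n + w ≤ τ_n) = e^{-λw} · μ/(λ+μ) · Exp(λ+μ)(B)`. Hence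
`P(Δ_n ∩ {σ_n ∈ B} ∩ {(σ_0, …, σ_{n-1}) ∈ C})` factors as `F(C) · Exp(λ+μ)(B)`, which gives both
claims after dividing by `P(Δ_n) = F(univ) > 0`.
-/

open MeasureTheory ProbabilityTheory

/-- The event that the busy period initiated by customer 0 contains exactly `n+1` customers:
the `i`-th partial sum of inter-arrival times is smaller than the `i`-th partial sum of service
times for `i = 0, …, n-1`, and the `n`-th partial sum of inter-arrival times is at least the
`n`-th partial sum of service times. -/
def busyDelta {Ω : Type*} (τ σ : ℕ → Ω → ℝ) (n : ℕ) : Set Ω :=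
  {ω | (∀ i < n, ∑ j ∈ Finset.range (i + 1), τ j ω < ∑ j ∈ Finset.range (i + 1), σ j ω) ∧
       ∑ j ∈ Finset.range (n + 1), σ j ω ≤ ∑ j ∈ Finset.range (n + 1), τ j ω}

open Real Set
open scoped ENNReal

namespace ProbabilityTheory

section Exponential

variable {r : ℝ}

lemma expMeasure_eq_withDensity (r : ℝ) :
    expMeasure r = volume.withDensity (exponentialPDF r) := rfl

lemma expMeasure_singleton (r x : ℝ) : expMeasure r {x} = 0 :=
  withDensity_absolutelyContinuous _ _ (measure_singleton x)

lemma ae_nonneg_expMeasure (r : ℝ) : ∀ᵐ x ∂expMeasure r, 0 ≤ x := by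
  simp only [ae_iff, not_le]
  rw [Iio_def, expMeasure_eq_withDensity, withDensity_apply _ measurableSet_Iio]
  exact lintegral_exponentialPDF_of_nonpos le_rfl

lemma expMeasure_Iic (hr : 0 < r) {x : ℝ} (hx : 0 ≤ x) :
    expMeasure r (Iic x) = ENNReal.ofReal (1 - exp (-(r * x))) := by
  rw [expMeasure_eq_withDensity, withDensity_apply _ measurableSet_Iic,
    lintegral_exponentialPDF_eq_antiDeriv hr, if_pos hx]

lemma expMeasure_Ici (hr : 0 < r) {x : ℝ} (hx : 0 ≤ x) :
    expMeasure r (Ici x) = ENNReal.ofReal (exp (-(r * x))) := by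
  have := isProbabilityMeasure_expMeasure hr
  rw [← measure_congr (Ioi_ae_eq_Ici' (expMeasure_singleton r x)), ← compl_Iic,
    prob_compl_eq_one_sub measurableSet_Iic, expMeasure_Iic hr hx, ← ENNReal.ofReal_one,
    ← ENNReal.ofReal_sub _ (sub_nonneg.2 (exp_le_one_iff.2 (by nlinarith))), sub_sub_cancel]

lemma ofReal_exp_neg_mul_mul_exponentialPDF {lam mu : ℝ} (hlam : 0 ≤ lam) (hmu : 0 < mu)
    (x : ℝ) :
    ENNReal.ofReal (exp (-(lam * x))) * exponentialPDF mu x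
      = ENNReal.ofReal (mu / (lam + mu)) * exponentialPDF (lam + mu) x := by
  rcases lt_or_ge x 0 with hx | hx
  · simp [exponentialPDF_of_neg hx]
  rw [exponentialPDF_of_nonneg hx, exponentialPDF_of_nonneg hx,
    ← ENNReal.ofReal_mul (exp_nonneg _), ← ENNReal.ofReal_mul (by positivity)]
  congr 1
  rw [← mul_assoc (mu / _), div_mul_cancel₀ _ (by positivity), add_mul, neg_add, exp_add]
  ring

lemma setLIntegral_exp_neg_mul_expMeasure {lam mu : ℝ} (hlam : 0 ≤ lam) (hmu : 0 < mu)
    {B : Set ℝ} (hB : MeasurableSet B) :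
    ∫⁻ x in B, ENNReal.ofReal (exp (-(lam * x))) ∂expMeasure mu
      = ENNReal.ofReal (mu / (lam + mu)) * expMeasure (lam + mu) B := by
  have hpdf (r : ℝ) : Measurable (exponentialPDF r) :=
    (measurable_exponentialPDFReal r).ennreal_ofReal
  rw [expMeasure_eq_withDensity, restrict_withDensity hB,
    lintegral_withDensity_eq_lintegral_mul _ (hpdf mu) (by fun_prop)]
  simp_rw [Pi.mul_apply, mul_comm (exponentialPDF mu _),
    ofReal_exp_neg_mul_mul_exponentialPDF hlam hmu]
  rw [lintegral_const_mul _ (hpdf _), expMeasure_eq_withDensity, withDensity_apply _ hB]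

lemma expMeasure_prod_setOf_add_le {lam mu c : ℝ} (hlam : 0 < lam) (hmu : 0 < mu) (hc : 0 ≤ c)
    {B : Set ℝ} (hB : MeasurableSet B) :
    (expMeasure mu).prod (expMeasure lam) {u | u.1 ∈ B ∧ u.1 + c ≤ u.2}
      = ENNReal.ofReal (exp (-(lam * c)))
        * (ENNReal.ofReal (mu / (lam + mu)) * expMeasure (lam + mu) B) := by
  have := isProbabilityMeasure_expMeasure hlam
  have hE : MeasurableSet {u : ℝ × ℝ | u.1 ∈ B ∧ u.1 + c ≤ u.2} :=
    (measurable_fst hB).inter (measurableSet_le (by fun_prop) measurable_snd)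
  rw [Measure.prod_apply hE]
  have hslice (x : ℝ) : expMeasure lam (Prod.mk x ⁻¹' {u | u.1 ∈ B ∧ u.1 + c ≤ u.2})
      = B.indicator (fun x ↦ expMeasure lam (Ici (x + c))) x := by
    by_cases hx : x ∈ B <;> simp [hx, Ici_def]
  simp_rw [hslice]
  rw [lintegral_indicator hB, ← setLIntegral_exp_neg_mul_expMeasure hlam.le hmu hB,
    ← lintegral_const_mul _ (by fun_prop)]
  refine setLIntegral_congr_fun_ae hB ((ae_nonneg_expMeasure mu).mono fun x hx _ ↦ ?_)
  rw [expMeasure_Ici hlam (by positivity), ← ENNReal.ofReal_mul (exp_nonneg _), ← exp_add]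
  ring_nf

end Exponential

section Independence

variable {Ω ι α β γ : Type*} {mΩ : MeasurableSpace Ω} {mα : MeasurableSpace α}
  {mβ : MeasurableSpace β} {mγ : MeasurableSpace γ} {P : Measure Ω}

lemma measure_preimage_prodMk_eq_lintegral [IsFiniteMeasure P] {X : Ω → α} {U : Ω → β}
    (hX : Measurable X) (hU : Measurable U) (hXU : IndepFun X U P) {E : Set (α × β)}
    (hE : MeasurableSet E) :
    P ((fun ω ↦ (X ω, U ω)) ⁻¹' E) = ∫⁻ x, P.map U (Prod.mk x ⁻¹' E) ∂P.map X := by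
  rw [← Measure.map_apply (hX.prodMk hU) hE,
    (indepFun_iff_map_prod_eq_prod_map_map hX.aemeasurable hU.aemeasurable).1 hXU,
    Measure.prod_apply hE]

lemma measurable_biSup_comap (f : ι → Ω → β) {S : Set ι} {i : ι} (hi : i ∈ S) :
    Measurable[⨆ j ∈ S, mβ.comap (f j)] (f i) :=
  (comap_measurable (f i)).mono (le_iSup₂ (f := fun j (_ : j ∈ S) ↦ mβ.comap (f j)) i hi) le_rfl

lemma measurable_indicator_biSup_comap [Zero β] (f : ι → Ω → β) (S : Set ι) :
    Measurable[⨆ j ∈ S, mβ.comap (f j)] (fun ω ↦ S.indicator (f · ω)) := by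
  let : MeasurableSpace Ω := ⨆ j ∈ S, mβ.comap (f j)
  refine measurable_pi_lambda _ fun i ↦ ?_
  by_cases hi : i ∈ S
  · simpa [hi] using measurable_biSup_comap f hi
  · simp [hi]

lemma iIndepFun.indepFun_of_measurable_biSup {f : ι → Ω → β} (hf : iIndepFun f P)
    (hfm : ∀ i, Measurable (f i)) {S T : Set ι} (hST : Disjoint S T) {X : Ω → α} {Y : Ω → γ}
    (hX : Measurable[⨆ i ∈ S, mβ.comap (f i)] X)
    (hY : Measurable[⨆ i ∈ T, mβ.comap (f i)] Y) :
    IndepFun X Y P :=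
  indep_of_indep_of_le_right (indep_of_indep_of_le_left
    (indep_iSup_of_disjoint (fun i ↦ (hfm i).comap_le) hf hST) hX.comap_le) hY.comap_le

lemma map_cond_eq_and_indepFun_cond_of_measure_inter_eq_mul [IsFiniteMeasure P] {A : Set Ω}
    (hA : MeasurableSet A) {Y : Ω → β} {Z : Ω → γ} (hY : Measurable Y) {ν : Measure β}
    [IsProbabilityMeasure ν] {F : Set γ → ℝ≥0∞} (hF₀ : F univ ≠ 0)
    (hF : ∀ B C, MeasurableSet B → MeasurableSet C → P (A ∩ Y ⁻¹' B ∩ Z ⁻¹' C) = F C * ν B) :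
    (P[|A]).map Y = ν ∧ IndepFun Y Z (P[|A]) := by
  have hFZ (C : Set γ) (hC : MeasurableSet C) : P (A ∩ Z ⁻¹' C) = F C := by
    simpa using hF univ C .univ hC
  have hFY (B : Set β) (hB : MeasurableSet B) : P (A ∩ Y ⁻¹' B) = F univ * ν B := by
    simpa using hF B univ hB .univ
  have hPA : P A = F univ := by simpa using hFZ univ .univ
  have hcondY (B : Set β) (hB : MeasurableSet B) : P[Y ⁻¹' B|A] = ν B := by
    rw [cond_apply hA, hFY B hB, ← mul_assoc, ← hPA,
      ENNReal.inv_mul_cancel (hPA ▸ hF₀) (measure_ne_top _ _), one_mul]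
  refine ⟨Measure.ext fun B hB ↦ by rw [Measure.map_apply hY hB, hcondY B hB],
    indepFun_iff_measure_inter_preimage_eq_mul.2 fun B C hB hC ↦ ?_⟩
  rw [hcondY B hB, cond_apply hA, cond_apply hA, ← inter_assoc, hF B C hB hC, hFZ C hC]
  ring

lemma measure_inter_setOf_add_le_eq_mul [IsFiniteMeasure P] {lam mu : ℝ} (hlam : 0 < lam)
    (hmu : 0 < mu) {X : Ω → α} {S T : Ω → ℝ} (hX : Measurable X) (hS : Measurable S)
    (hT : Measurable T) (hXST : IndepFun X (fun ω ↦ (S ω, T ω)) P) (hST : IndepFun S T P)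
    (hSlaw : P.map S = expMeasure mu) (hTlaw : P.map T = expMeasure lam) {D : Set α}
    (hD : MeasurableSet D) {c : α → ℝ} (hc : Measurable c) (hc₀ : ∀ x ∈ D, 0 ≤ c x)
    {B : Set ℝ} (hB : MeasurableSet B) :
    P (X ⁻¹' D ∩ S ⁻¹' B ∩ {ω | S ω + c (X ω) ≤ T ω})
      = (∫⁻ x in D, ENNReal.ofReal (exp (-(lam * c x))) ∂P.map X)
        * (ENNReal.ofReal (mu / (lam + mu)) * expMeasure (lam + mu) B) := by
  set E : Set (α × ℝ × ℝ) := {p | p.1 ∈ D ∧ p.2.1 ∈ B ∧ p.2.1 + c p.1 ≤ p.2.2}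
  have hE : MeasurableSet E := (measurable_fst hD).inter ((measurable_snd.fst hB).inter
    (measurableSet_le (measurable_snd.fst.add (hc.comp measurable_fst)) measurable_snd.snd))
  have hpre : X ⁻¹' D ∩ S ⁻¹' B ∩ {ω | S ω + c (X ω) ≤ T ω}
      = (fun ω ↦ (X ω, (S ω, T ω))) ⁻¹' E := by
    ext ω
    simp [E, and_assoc]
  rw [hpre, measure_preimage_prodMk_eq_lintegral hX (hS.prodMk hT) hXST hE,
    (indepFun_iff_map_prod_eq_prod_map_map hS.aemeasurable hT.aemeasurable).1 hST, hSlaw, hTlaw,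
    ← lintegral_mul_const _ (by fun_prop), ← lintegral_indicator hD]
  refine lintegral_congr fun x ↦ ?_
  by_cases hx : x ∈ D
  · simp [E, hx, expMeasure_prod_setOf_add_le hlam hmu (hc₀ x hx) hB]
  · simp [E, hx]

end Independence

end ProbabilityTheory

namespace BusyPeriod

open Finset

variable {Ω : Type*} (τ σ : ℕ → Ω → ℝ) (n : ℕ)

def pastIndices : Finset (ℕ ⊕ ℕ) := (range n).disjSum (range n)

/-- Zeroing the entries of customers `≥ n` makes this a function of the past alone. -/
noncomputable def pastSample (ω : Ω) : ℕ ⊕ ℕ → ℝ :=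
  (pastIndices n : Set (ℕ ⊕ ℕ)).indicator (Sum.elim τ σ · ω)

def pastEvent : Set (ℕ ⊕ ℕ → ℝ) :=
  {w | ∀ i < n, ∑ j ∈ range (i + 1), w (.inl j) < ∑ j ∈ range (i + 1), w (.inr j)}

def waitingTime (w : ℕ ⊕ ℕ → ℝ) : ℝ := ∑ j ∈ range n, (w (.inr j) - w (.inl j))

def pastServices (w : ℕ ⊕ ℕ → ℝ) (i : Fin n) : ℝ := w (.inr i)

variable {τ σ n}

lemma sum_range_pastSample_inl {k : ℕ} (hk : k ≤ n) (ω : Ω) :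
    ∑ j ∈ range k, pastSample τ σ n ω (.inl j) = ∑ j ∈ range k, τ j ω :=
  sum_congr rfl fun j hj ↦ indicator_of_mem (by simp [pastIndices]; grind) _

lemma sum_range_pastSample_inr {k : ℕ} (hk : k ≤ n) (ω : Ω) :
    ∑ j ∈ range k, pastSample τ σ n ω (.inr j) = ∑ j ∈ range k, σ j ω :=
  sum_congr rfl fun j hj ↦ indicator_of_mem (by simp [pastIndices]; grind) _

lemma pastServices_pastSample (ω : Ω) :
    pastServices n (pastSample τ σ n ω) = fun i : Fin n ↦ σ i ω :=
  funext fun i ↦ indicator_of_mem (by simp [pastIndices]) (Sum.elim τ σ · ω)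

lemma waitingTime_nonneg {w : ℕ ⊕ ℕ → ℝ} (hw : w ∈ pastEvent n) : 0 ≤ waitingTime n w := by
  rcases n with _ | k
  · simp [waitingTime]
  · have := hw k k.lt_succ_self
    rw [waitingTime, sum_sub_distrib]
    linarith

lemma busyDelta_eq :
    busyDelta τ σ n = pastSample τ σ n ⁻¹' pastEvent n
      ∩ {ω | σ n ω + waitingTime n (pastSample τ σ n ω) ≤ τ n ω} := by
  ext ω
  simp only [busyDelta, pastEvent, waitingTime, Set.mem_inter_iff, Set.mem_preimage,
    Set.mem_ofPred_eq, sum_sub_distrib]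
  refine and_congr (forall₂_congr fun i hi ↦ ?_) ?_
  · rw [sum_range_pastSample_inl hi, sum_range_pastSample_inr hi]
  · rw [sum_range_pastSample_inl le_rfl, sum_range_pastSample_inr le_rfl, sum_range_succ,
      sum_range_succ]
    constructor <;> intro h <;> linarith

variable [MeasurableSpace Ω] {P : Measure Ω}

lemma measurableSet_pastEvent : MeasurableSet (pastEvent n) := by
  simp only [pastEvent, Set.ofPred_forall]
  exact .iInter fun i ↦ .iInter fun _ ↦ measurableSet_lt (by fun_prop) (by fun_prop)

@[fun_prop]
lemma measurable_waitingTime : Measurable (waitingTime n) := by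
  unfold waitingTime
  fun_prop

lemma measurable_pastServices : Measurable (pastServices n) :=
  measurable_pi_lambda _ fun _ ↦ measurable_pi_apply _

section Sample

variable (hτm : ∀ j, Measurable (τ j)) (hσm : ∀ j, Measurable (σ j))
include hτm hσm

lemma measurable_sumElim : ∀ i, Measurable (Sum.elim τ σ i) := Sum.forall.2 ⟨hτm, hσm⟩

lemma measurable_pastSample : Measurable (pastSample τ σ n) :=
  (measurable_indicator_biSup_comap _ _).mono
    (iSup₂_le fun i _ ↦ (measurable_sumElim hτm hσm i).comap_le) le_rfl

lemma indepFun_pastSample (hindep : iIndepFun (Sum.elim τ σ) P) :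
    IndepFun (pastSample τ σ n) (fun ω ↦ (σ n ω, τ n ω)) P :=
  hindep.indepFun_of_measurable_biSup (measurable_sumElim hτm hσm) (T := {.inl n, .inr n})
    (by simpa [Set.disjoint_left, pastIndices] using fun _ ↦ ne_of_lt)
    (measurable_indicator_biSup_comap _ _)
    ((measurable_biSup_comap (Sum.elim τ σ) (i := .inr n) (by simp)).prodMk
      (measurable_biSup_comap (Sum.elim τ σ) (i := .inl n) (by simp)))

lemma measurableSet_busyDelta : MeasurableSet (busyDelta τ σ n) := by
  rw [busyDelta_eq]
  exact measurable_pastSample hτm hσm measurableSet_pastEvent |>.inter <| measurableSet_le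
    ((hσm n).add (measurable_waitingTime.comp (measurable_pastSample hτm hσm))) (hτm n)

variable {lam mu : ℝ} (hlam : 0 < lam) (hmu : 0 < mu)
  (hindep : iIndepFun (Sum.elim τ σ) P)
  (hτ : ∀ j, P.map (τ j) = expMeasure lam) (hσ : ∀ j, P.map (σ j) = expMeasure mu)
include hlam hmu hindep hτ hσ

lemma measure_pastSample_preimage_pastEvent_ne_zero :
    P (pastSample τ σ n ⁻¹' pastEvent n) ≠ 0 := by
  set t : ℕ ⊕ ℕ → Set ℝ := Sum.elim (fun _ ↦ Iic 1) (fun _ ↦ Ici 2)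
  have hsub : ⋂ i ∈ pastIndices n, Sum.elim τ σ i ⁻¹' t i ⊆ pastSample τ σ n ⁻¹' pastEvent n := by
    intro ω hω i hi
    simp only [Set.mem_iInter, Set.mem_preimage] at hω
    have hτ1 (j : ℕ) (hj : j ∈ range (i + 1)) : τ j ω ≤ 1 :=
      hω (.inl j) (by simp [pastIndices] at hj ⊢; omega)
    have hσ2 (j : ℕ) (hj : j ∈ range (i + 1)) : 2 ≤ σ j ω :=
      hω (.inr j) (by simp [pastIndices] at hj ⊢; omega)
    rw [sum_range_pastSample_inl hi, sum_range_pastSample_inr hi]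
    calc ∑ j ∈ range (i + 1), τ j ω
        ≤ ∑ j ∈ range (i + 1), (1 : ℝ) := sum_le_sum hτ1
      _ < ∑ j ∈ range (i + 1), (2 : ℝ) :=
        sum_lt_sum_of_nonempty nonempty_range_add_one fun _ _ ↦ one_lt_two
      _ ≤ ∑ j ∈ range (i + 1), σ j ω := sum_le_sum hσ2
  have hfactor : ∀ i ∈ pastIndices n, P (Sum.elim τ σ i ⁻¹' t i) ≠ 0 := by
    rintro (j | j) -
    · change P (τ j ⁻¹' Iic 1) ≠ 0
      rw [← Measure.map_apply (hτm j) measurableSet_Iic, hτ j,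
        expMeasure_Iic hlam zero_le_one]
      exact (ENNReal.ofReal_pos.2 (sub_pos.2 (exp_lt_one_iff.2 (by linarith)))).ne'
    · change P (σ j ⁻¹' Ici 2) ≠ 0
      rw [← Measure.map_apply (hσm j) measurableSet_Ici, hσ j,
        expMeasure_Ici hmu zero_le_two]
      exact (ENNReal.ofReal_pos.2 (exp_pos _)).ne'
  have hprod := hindep.measure_inter_preimage_eq_mul (pastIndices n) (sets := t)
    (by rintro (j | j) - <;> simp [t, measurableSet_Iic, measurableSet_Ici])
  exact fun h ↦ prod_ne_zero_iff.2 hfactor (hprod ▸ measure_mono_null hsub h)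

lemma setLIntegral_pastEvent_ne_zero :
    ∫⁻ w in pastEvent n, ENNReal.ofReal (exp (-(lam * waitingTime n w))) ∂P.map (pastSample τ σ n)
      ≠ 0 := by
  rw [← pos_iff_ne_zero, setLIntegral_pos_iff (by fun_prop)]
  simpa [Function.support, exp_pos, Measure.map_apply (measurable_pastSample hτm hσm)
    measurableSet_pastEvent, pos_iff_ne_zero] using
    measure_pastSample_preimage_pastEvent_ne_zero hτm hσm hlam hmu hindep hτ hσ

lemma measure_busyDelta_inter_preimage [IsFiniteMeasure P] {B : Set ℝ} (hB : MeasurableSet B)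
    {C : Set (Fin n → ℝ)} (hC : MeasurableSet C) :
    P (busyDelta τ σ n ∩ σ n ⁻¹' B ∩ (fun ω (i : Fin n) ↦ σ i ω) ⁻¹' C)
      = (∫⁻ w in pastEvent n ∩ pastServices n ⁻¹' C,
            ENNReal.ofReal (exp (-(lam * waitingTime n w))) ∂P.map (pastSample τ σ n))
          * ENNReal.ofReal (mu / (lam + mu)) * expMeasure (lam + mu) B := by
  have hset : busyDelta τ σ n ∩ σ n ⁻¹' B ∩ (fun ω (i : Fin n) ↦ σ i ω) ⁻¹' C
      = pastSample τ σ n ⁻¹' (pastEvent n ∩ pastServices n ⁻¹' C) ∩ σ n ⁻¹' B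
        ∩ {ω | σ n ω + waitingTime n (pastSample τ σ n ω) ≤ τ n ω} := by
    ext ω
    simp only [busyDelta_eq, Set.mem_inter_iff, Set.mem_preimage, pastServices_pastSample]
    tauto
  rw [hset, mul_assoc, measure_inter_setOf_add_le_eq_mul hlam hmu
    (measurable_pastSample hτm hσm) (hσm n) (hτm n) (indepFun_pastSample hτm hσm hindep)
    (hindep.indepFun (by simp : Sum.inr n ≠ Sum.inl n)) (hσ n) (hτ n)
    (measurableSet_pastEvent.inter (measurable_pastServices hC)) measurable_waitingTime
    (fun w hw ↦ waitingTime_nonneg hw.1) hB]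

end Sample

end BusyPeriod

open BusyPeriod

/-- under `P(·|Δ_n)`, the last service `σ_n` is distributed as `Exp(λ+μ)` and is
independent of the vector `(σ_0, …, σ_{n-1})`. -/
theorem condLaw_last_service
    {Ω : Type*} [MeasurableSpace Ω] (P : Measure Ω) [IsProbabilityMeasure P]
    (lam mu : ℝ) (hlam : 0 < lam) (hmu : 0 < mu)
    (τ σ : ℕ → Ω → ℝ)
    (hτm : ∀ j, Measurable (τ j)) (hσm : ∀ j, Measurable (σ j))
    (hindep : iIndepFun (Sum.elim τ σ) P)
    (hτ : ∀ j, P.map (τ j) = expMeasure lam)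
    (hσ : ∀ j, P.map (σ j) = expMeasure mu)
    (n : ℕ) :
    (P[|busyDelta τ σ n]).map (σ n) = expMeasure (lam + mu) ∧
    IndepFun (σ n) (fun ω (i : Fin n) => σ i ω) (P[|busyDelta τ σ n]) := by
  have := isProbabilityMeasure_expMeasure (add_pos hlam hmu)
  refine map_cond_eq_and_indepFun_cond_of_measure_inter_eq_mul (measurableSet_busyDelta hτm hσm)
    (hσm n) ?_ fun B C hB hC ↦
      measure_busyDelta_inter_preimage hτm hσm hlam hmu hindep hτ hσ hB hC
  simpa using mul_ne_zero (setLIntegral_pastEvent_ne_zero hτm hσm hlam hmu hindep hτ hσ)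
    (ENNReal.ofReal_pos.2 (by positivity)).ne'
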